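/- arXiv:2110.04402 — 8 statements merged into one kernel-verified Lean document; each statement's English description precedes it below -/
import Mathlib

section
/- It is impossible to construct a time integrator of order greater than or equal to 2 using real-valued forward Euler time steps of variable sizes. Precisely: for every n ≥ 1 and every tuple of real numbers w_1, …, w_n with w_1 + ⋯ + w_n = 1, the local error function Δt ↦ ∏_{i=1}^n (1 + w_i·Δt) − e^{Δt} is NOT o(Δt²) as Δt → 0; that is, it is false that lim_{Δt→0} (∏_{i=1}^n (1 + w_i Δt) − e^{Δt})/Δt² = 0. -/
open Filter Topology

/-!
Over `ℝ`, `∏ i, (1 + w i * t) = 1 + (∑ w) t + e₂ t² + O(t³)` with `2 e₂ = (∑ w)² - ∑ w²`,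
while `exp t = 1 + t + t² / 2 + O(t³)`. When `∑ w = 1` the local error divided by `t²` therefore
tends to `-(∑ w²) / 2`, which vanishes only if every `w i` is zero, contradicting `∑ w = 1`.
-/

namespace Polynomial

theorem coeff_prod_one_add_C_mul_X {R ι : Type*} [CommRing R] (s : Finset ι) (w : ι → R) :
    (∏ i ∈ s, (1 + C (w i) * X)).coeff 0 = 1 ∧
    (∏ i ∈ s, (1 + C (w i) * X)).coeff 1 = ∑ i ∈ s, w i ∧
    2 * (∏ i ∈ s, (1 + C (w i) * X)).coeff 2 = (∑ i ∈ s, w i) ^ 2 - ∑ i ∈ s, w i ^ 2 := by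
  classical
  induction s using Finset.induction with
  | empty => simp [coeff_one]
  | @insert a s ha ih =>
    obtain ⟨h0, h1, h2⟩ := ih
    rw [Finset.prod_insert ha, Finset.sum_insert ha, Finset.sum_insert ha, add_mul, one_mul,
      mul_assoc]
    simp only [coeff_add, coeff_C_mul, coeff_X_mul, coeff_X_mul_zero, h0, h1]
    refine ⟨by ring, by ring, ?_⟩
    linear_combination h2

theorem tendsto_eval_sub_div_sq {𝕜 : Type*} [NormedField 𝕜] (p : 𝕜[X]) :
    Tendsto (fun t => (p.eval t - p.coeff 0 - p.coeff 1 * t) / t ^ 2) (𝓝[≠] 0)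
      (𝓝 (p.coeff 2)) := by
  have hp : p = X ^ 2 * p.divX.divX + C (p.coeff 1) * X + C (p.coeff 0) := by
    conv_lhs => rw [← X_mul_divX_add p, ← X_mul_divX_add p.divX]
    simp only [coeff_divX]
    ring
  have hq : p.divX.divX.eval 0 = p.coeff 2 := by simp [← coeff_zero_eq_eval_zero, coeff_divX]
  rw [← hq]
  refine (p.divX.divX.continuous.tendsto 0).mono_left nhdsWithin_le_nhds |>.congr' ?_
  filter_upwards [self_mem_nhdsWithin] with t (ht : t ≠ 0)
  have heval : p.eval t = t ^ 2 * p.divX.divX.eval t + p.coeff 1 * t + p.coeff 0 := by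
    conv_lhs => rw [hp]
    simp
  rw [heval]
  field_simp
  ring

end Polynomial

theorem Real.tendsto_exp_sub_one_sub_div_sq :
    Tendsto (fun t => (exp t - 1 - t) / t ^ 2) (𝓝[≠] 0) (𝓝 (1 / 2)) := by
  have hslope : Tendsto (fun t => t⁻¹ * (exp t - 1)) (𝓝[≠] 0) (𝓝 1) := by
    simpa using hasDerivAt_iff_tendsto_slope_zero.1 (hasDerivAt_exp 0)
  refine HasDerivAt.lhopital_zero_nhdsNE (f' := fun t => exp t - 1) (g' := fun t => 2 * t)
    (Eventually.of_forall fun t => ((hasDerivAt_exp t).sub_const 1).sub (hasDerivAt_id t))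
    (Eventually.of_forall fun t => by simpa using hasDerivAt_pow 2 t) ?_ ?_ ?_ ?_
  · filter_upwards [self_mem_nhdsWithin] with t (ht : t ≠ 0) using mul_ne_zero two_ne_zero ht
  · exact ((continuous_exp.sub continuous_const).sub continuous_id).tendsto' 0 0 (by simp)
      |>.mono_left nhdsWithin_le_nhds
  · exact (continuous_pow 2).tendsto' 0 0 (by simp) |>.mono_left nhdsWithin_le_nhds
  · convert hslope.const_mul 2⁻¹ using 2 with t
    · ring
    · norm_num

theorem no_second_order_real_euler_path_general (n : ℕ) (w : Fin n → ℝ)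
    (hsum : ∑ i, w i = 1) :
    ¬ Tendsto (fun Δt : ℝ => ((∏ i, (1 + w i * Δt)) - Real.exp Δt) / Δt ^ 2)
      (𝓝[≠] (0 : ℝ)) (𝓝 0) := by
  open Polynomial in
  intro h
  set P : ℝ[X] := ∏ i, (1 + C (w i) * X)
  obtain ⟨hP0, hP1, hP2⟩ := coeff_prod_one_add_C_mul_X Finset.univ w
  have hlim : Tendsto (fun Δt : ℝ => ((∏ i, (1 + w i * Δt)) - Real.exp Δt) / Δt ^ 2)
      (𝓝[≠] 0) (𝓝 (P.coeff 2 - 1 / 2)) := by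
    refine (P.tendsto_eval_sub_div_sq.sub Real.tendsto_exp_sub_one_sub_div_sq).congr fun t => ?_
    simp only [P, hP0, hP1, hsum, eval_prod, eval_add, eval_one, eval_mul, eval_C, eval_X]
    ring
  have hsq : ∑ i, w i ^ 2 = 0 := by
    rw [hsum] at hP2
    linear_combination (-2) * tendsto_nhds_unique hlim h + hP2
  have hw : ∀ i, w i = 0 := fun i => pow_eq_zero_iff two_ne_zero |>.1 <|
    (Finset.sum_eq_zero_iff_of_nonneg fun j _ => sq_nonneg (w j)).1 hsq i (Finset.mem_univ i)
  simp [hw] at hsum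

/-- It is impossible to construct a time integrator of order ≥ 2 using real-valued
forward Euler time steps of variable sizes: for every `n ≥ 1` and real step fractions
`w 1, …, w n` summing to `1`, the local error
`Δt ↦ ∏ i, (1 + w i * Δt) − exp Δt` is not `o(Δt²)` as `Δt → 0`. -/
theorem no_second_order_real_euler_path (n : ℕ) (hn : 1 ≤ n) (w : Fin n → ℝ)
    (hsum : ∑ i, w i = 1) :
    ¬ Tendsto (fun Δt : ℝ => ((∏ i, (1 + w i * Δt)) - Real.exp Δt) / Δt ^ 2)
      (𝓝[≠] (0 : ℝ)) (𝓝 0) :=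
  no_second_order_real_euler_path_general n w hsum
end

section
/- For every n ≥ 1 and all real numbers w_1, …, w_n with w_1 + ⋯ + w_n = 1, the second elementary symmetric polynomial satisfies ∑_{1 ≤ i < j ≤ n} w_i·w_j < 1/2; in particular it never equals 1/2, so the second-order condition cannot be satisfied by real step fractions. -/
/-- For every `n ≥ 1` and real numbers `w 1, …, w n` with `∑ i, w i = 1`, the
second elementary symmetric polynomial satisfies `∑_{i<j} w i * w j < 1/2`;
in particular the second-order condition `∑_{i<j} w i * w j = 1/2` cannot be
satisfied by real step fractions. -/
theorem real_euler_second_esymm_lt_half (n : ℕ) (hn : 1 ≤ n) (w : Fin n → ℝ)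
    (hsum : ∑ i, w i = 1) :
    ∑ p ∈ Finset.univ.filter (fun p : Fin n × Fin n => p.1 < p.2), w p.1 * w p.2
      < 1 / 2 := by
  set S := ∑ p ∈ Finset.univ.filter (fun p : Fin n × Fin n => p.1 < p.2), w p.1 * w p.2 with hS
  have hswap : S = ∑ p ∈ Finset.univ.filter (fun p : Fin n × Fin n => p.2 < p.1),
      w p.1 * w p.2 := by
    rw [hS]
    apply Finset.sum_nbij' (fun p => Prod.swap p) (fun p => Prod.swap p) <;>
      simp [mul_comm]
  have hdiag : (∑ p ∈ Finset.univ.filter (fun p : Fin n × Fin n => p.1 = p.2),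
      w p.1 * w p.2) = ∑ i, w i ^ 2 := by
    rw [Finset.sum_filter]
    rw [Fintype.sum_prod_type]
    apply Finset.sum_congr rfl
    intro i _
    simp [Finset.sum_ite_eq, sq]
  have hexpand : (1 : ℝ) = ∑ i, w i ^ 2 + 2 * S := by
    have h1 : (1 : ℝ) = (∑ i, w i) * (∑ i, w i) := by rw [hsum]; ring
    rw [h1, Finset.sum_mul_sum]
    have h2 : (∑ i, ∑ j, w i * w j) = ∑ p : Fin n × Fin n, w p.1 * w p.2 := by
      rw [Fintype.sum_prod_type]
    rw [h2]
    have htri : ∀ p : Fin n × Fin n, p.1 = p.2 ∨ p.1 < p.2 ∨ p.2 < p.1 := by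
      intro p
      rcases lt_trichotomy p.1 p.2 with h | h | h <;> tauto
    have hsplit : (∑ p : Fin n × Fin n, w p.1 * w p.2) =
        (∑ p ∈ Finset.univ.filter (fun p : Fin n × Fin n => p.1 = p.2), w p.1 * w p.2)
        + ((∑ p ∈ Finset.univ.filter (fun p : Fin n × Fin n => p.1 < p.2), w p.1 * w p.2)
        + (∑ p ∈ Finset.univ.filter (fun p : Fin n × Fin n => p.2 < p.1), w p.1 * w p.2)) := by
      rw [← Finset.sum_filter_add_sum_filter_not Finset.univ
        (fun p : Fin n × Fin n => p.1 = p.2)]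
      congr 1
      rw [← Finset.sum_filter_add_sum_filter_not
        (Finset.univ.filter (fun p : Fin n × Fin n => ¬ p.1 = p.2))
        (fun p : Fin n × Fin n => p.1 < p.2)]
      congr 1
      · congr 1
        ext p
        simp only [Finset.mem_filter, Finset.mem_univ, true_and]
        constructor
        · tauto
        · intro h; exact ⟨ne_of_lt h, h⟩
      · congr 1
        ext p
        simp only [Finset.mem_filter, Finset.mem_univ, true_and]
        constructor
        · rintro ⟨h1, h2⟩
          rcases htri p with h | h | h <;> tauto
        · intro h
          exact ⟨ne_of_gt h, not_lt_of_gt h⟩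
    rw [hsplit, hdiag, ← hswap, ← hS]
    ring
  have hsq : 0 < ∑ i, w i ^ 2 := by
    have hne : ∃ i, w i ≠ 0 := by
      by_contra h
      push_neg at h
      simp [h] at hsum
    obtain ⟨i, hi⟩ := hne
    exact Finset.sum_pos' (fun j _ => sq_nonneg _)
      ⟨i, Finset.mem_univ i, by positivity⟩
  linarith
end

section
/- Let p ≥ 1 and let w_1, …, w_p be complex numbers with e_k(w_1, …, w_p) = 1/k! for k = 1, …, p, let λ ∈ ℂ and T > 0. Then there exists a constant C > 0 such that for every positive integer N, setting h = T/N, the N-fold iterated complex Euler path approximation satisfies |(∏_{i=1}^p (1 + w_i·λ·h))^N − e^{λT}| ≤ C·h^p; i.e., the global error of the p-step complex Euler method for ẏ = λy on [0, T] is O(h^p). -/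
/-!
Under the order conditions `e_k(w) = 1/k!`, one step of the method multiplies by the degree-`p`
Taylor polynomial of `exp` at `z = λh`, whose distance to `exp z` is at most `‖z‖^(p+1) e^‖z‖`.
Both factors are bounded by `e^‖z‖`, so telescoping `a^N - b^N` loses a factor `N e^(N‖z‖)`,
and `N h^(p+1) = T h^p`.
-/

open Finset

theorem Finset.prod_one_add_mul_eq_sum_powersetCard {ι R : Type*} [Fintype ι] [CommSemiring R]
    (w : ι → R) (z : R) :
    ∏ i, (1 + w i * z) =
      ∑ k ∈ range (Fintype.card ι + 1), (∑ s ∈ univ.powersetCard k, ∏ i ∈ s, w i) * z ^ k := by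
  rw [prod_one_add, sum_powerset, card_univ]
  refine sum_congr rfl fun k _ => ?_
  rw [sum_mul]
  refine sum_congr rfl fun s hs => ?_
  rw [prod_mul_distrib, prod_const, (mem_powersetCard.mp hs).2]

theorem Finset.prod_one_add_mul_eq_sum_pow_div_factorial {ι K : Type*} [Fintype ι] [Field K]
    (w : ι → K)
    (hesymm : ∀ k : ℕ, 1 ≤ k → k ≤ Fintype.card ι →
      ∑ s ∈ univ.powersetCard k, ∏ i ∈ s, w i = 1 / (k.factorial : K))
    (z : K) :
    ∏ i, (1 + w i * z) = ∑ k ∈ range (Fintype.card ι + 1), z ^ k / k.factorial := by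
  rw [prod_one_add_mul_eq_sum_powersetCard]
  refine sum_congr rfl fun k hk => ?_
  rcases k.eq_zero_or_pos with rfl | hk0
  · simp
  · rw [hesymm k hk0 (Nat.lt_succ_iff.mp (mem_range.mp hk)), one_div_mul_eq_div]

theorem norm_pow_sub_pow_le {R : Type*} [NormedCommRing R] [NormOneClass R] {a b : R} {M : ℝ}
    (ha : ‖a‖ ≤ M) (hb : ‖b‖ ≤ M) (N : ℕ) :
    ‖a ^ N - b ^ N‖ ≤ N * M ^ (N - 1) * ‖a - b‖ := by
  have hM : 0 ≤ M := (norm_nonneg a).trans ha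
  have hterm : ∀ i ∈ range N, ‖a ^ i * b ^ (N - 1 - i)‖ ≤ M ^ (N - 1) := fun i hi => by
    calc ‖a ^ i * b ^ (N - 1 - i)‖ ≤ ‖a‖ ^ i * ‖b‖ ^ (N - 1 - i) :=
          (norm_mul_le _ _).trans (by gcongr <;> exact norm_pow_le _ _)
      _ ≤ M ^ i * M ^ (N - 1 - i) := by gcongr
      _ = M ^ (N - 1) := by
          rw [← pow_add, Nat.add_sub_cancel' (Nat.le_sub_one_of_lt (mem_range.mp hi))]
  calc ‖a ^ N - b ^ N‖ = ‖(∑ i ∈ range N, a ^ i * b ^ (N - 1 - i)) * (a - b)‖ := by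
        rw [geom_sum₂_mul]
    _ ≤ ‖∑ i ∈ range N, a ^ i * b ^ (N - 1 - i)‖ * ‖a - b‖ := norm_mul_le _ _
    _ ≤ (∑ _i ∈ range N, M ^ (N - 1)) * ‖a - b‖ := by gcongr; exact norm_sum_le_of_le _ hterm
    _ = N * M ^ (N - 1) * ‖a - b‖ := by rw [sum_const, card_range, nsmul_eq_mul]

theorem Complex.norm_sum_pow_div_factorial_pow_sub_exp_pow_le (z : ℂ) (n N : ℕ) :
    ‖(∑ k ∈ range n, z ^ k / k.factorial) ^ N - exp z ^ N‖ ≤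
      N * ‖z‖ ^ n * Real.exp ‖z‖ ^ N := by
  rcases N.eq_zero_or_pos with rfl | hN
  · simp
  have htaylor : ‖∑ k ∈ range n, z ^ k / k.factorial‖ ≤ Real.exp ‖z‖ :=
    (norm_sum_le _ _).trans <| by
      simpa [norm_div, norm_pow] using Real.sum_le_exp_of_nonneg (norm_nonneg z) n
  calc _ ≤ N * Real.exp ‖z‖ ^ (N - 1) * ‖∑ k ∈ range n, z ^ k / k.factorial - exp z‖ :=
        norm_pow_sub_pow_le htaylor (norm_exp_le_exp_norm z) N
    _ ≤ N * Real.exp ‖z‖ ^ (N - 1) * (‖z‖ ^ n * Real.exp ‖z‖) := by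
        rw [norm_sub_rev]; gcongr; exact norm_exp_sub_sum_le_norm_mul_exp z n
    _ = N * ‖z‖ ^ n * Real.exp ‖z‖ ^ N := by
        rw [← Nat.sub_add_cancel hN, pow_succ]; push_cast; ring

theorem complex_euler_global_error_general (p : ℕ) (w : Fin p → ℂ)
    (hesymm : ∀ k : ℕ, 1 ≤ k → k ≤ p →
      ∑ s ∈ Finset.univ.powersetCard k, ∏ i ∈ s, w i = 1 / (Nat.factorial k : ℂ))
    (lam : ℂ) (T : ℝ) (hT : 0 < T) :
    ∃ C > (0 : ℝ), ∀ N : ℕ, 0 < N →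
      ‖(∏ i, (1 + w i * lam * ((T / N : ℝ) : ℂ))) ^ N - Complex.exp (lam * T)‖
        ≤ C * (T / N) ^ p := by
  refine ⟨T * ‖lam‖ ^ (p + 1) * Real.exp (‖lam‖ * T) + 1, by positivity, fun N hN => ?_⟩
  set h : ℝ := T / N
  have hNh : N * h = T := mul_div_cancel₀ T (Nat.cast_ne_zero.mpr hN.ne')
  have hnorm : ‖lam * h‖ = ‖lam‖ * h := by
    rw [norm_mul, Complex.norm_real, Real.norm_of_nonneg (by positivity)]
  have hstep : ∏ i, (1 + w i * lam * h) = ∑ k ∈ range (p + 1), (lam * h) ^ k / k.factorial := by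
    simp_rw [mul_assoc]
    simpa using prod_one_add_mul_eq_sum_pow_div_factorial w (by simpa using hesymm) (lam * h)
  have hexp : Complex.exp (lam * T) = Complex.exp (lam * h) ^ N := by
    rw [← Complex.exp_nat_mul, ← hNh]; push_cast; ring_nf
  rw [hstep, hexp]
  calc _ ≤ N * ‖lam * h‖ ^ (p + 1) * Real.exp ‖lam * h‖ ^ N :=
        Complex.norm_sum_pow_div_factorial_pow_sub_exp_pow_le _ _ _
    _ = T * ‖lam‖ ^ (p + 1) * Real.exp (‖lam‖ * T) * h ^ p := by
        rw [hnorm, ← Real.exp_nat_mul, ← hNh]; ring_nf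
    _ ≤ _ := by gcongr; linarith

/-- Global error of the `p`-step complex Euler method for `ẏ = λy` on `[0, T]`.
If the elementary symmetric polynomials of the step fractions `w` satisfy
`e_k(w) = 1/k!` for `k = 1, …, p`, then there is `C > 0` such that for every
positive integer `N`, with `h = T/N`,
`|(∏ i, (1 + w i λ h))^N − e^{λT}| ≤ C h^p`. -/
theorem complex_euler_global_error (p : ℕ) (hp : 1 ≤ p) (w : Fin p → ℂ)
    (hesymm : ∀ k : ℕ, 1 ≤ k → k ≤ p →
      ∑ s ∈ Finset.univ.powersetCard k, ∏ i ∈ s, w i = 1 / (Nat.factorial k : ℂ))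
    (lam : ℂ) (T : ℝ) (hT : 0 < T) :
    ∃ C > (0 : ℝ), ∀ N : ℕ, 0 < N →
      ‖(∏ i, (1 + w i * lam * ((T / N : ℝ) : ℂ))) ^ N - Complex.exp (lam * T)‖
        ≤ C * (T / N) ^ p :=
  complex_euler_global_error_general p w hesymm lam T hT
end

section
/- Let 𝔸 be a complex Banach algebra, a ∈ 𝔸, T > 0, and let w_1, …, w_p be complex numbers with e_k(w_1, …, w_p) = 1/k! for k = 1, …, p. Then there exists a constant C > 0 such that for every positive integer N, setting h = T/N, ‖(∏_{i=1}^p (1 + h·w_i·a))^N − exp(T·a)‖ ≤ C·h^p; i.e., the p-step complex Euler method converges with order p for linear systems ẏ = Ay, including matrix systems and spatially discretized linear PDEs. -/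
/-!
The stability function of the method is `R(z) = ∏ i, (1 + w i z) = ∑ k ≤ p, e_k(w) z ^ k`, so the
order conditions make it the degree-`p` Taylor polynomial of `exp`. With `h = T / N`, one step
`x = R(h a)` therefore differs from the exact step `y = exp (h a)` by `O(h ^ (p + 1))`. Since `x`
and `y` commute, `x ^ N - y ^ N = ∑ i < N, x ^ i y ^ (N - 1 - i) (x - y)`; the powers `y ^ j`
are bounded because `y ^ j = exp (j h a)` with `j h ≤ T`, and the powers `x ^ i = (y + (x - y)) ^ i`
stay bounded by the binomial theorem because `i ‖x - y‖ = O(h ^ p)`. Summing `N` local errors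
`O(h ^ (p + 1))` gives the global error `O(h ^ p)`.
-/

open Finset Polynomial
open scoped Nat

section Stability

variable {R : Type*} [NormedRing R]

theorem norm_pow_le_max_norm_one_mul_pow (r : R) (n : ℕ) :
    ‖r ^ n‖ ≤ max ‖(1 : R)‖ 1 * ‖r‖ ^ n := by
  rcases n.eq_zero_or_pos with rfl | hn
  · simp
  · exact (norm_pow_le' r hn).trans (le_mul_of_one_le_left (by positivity) (le_max_right _ _))

theorem Commute.norm_add_pow_le {y r : R} (h : Commute y r) {m : ℕ} {E : ℝ}
    (hy : ∀ j ≤ m, ‖y ^ j‖ ≤ E) :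
    ‖(y + r) ^ m‖ ≤ max ‖(1 : R)‖ 1 * E * Real.exp (m * ‖r‖) := by
  set D := max ‖(1 : R)‖ 1
  have hE : 0 ≤ E := (norm_nonneg _).trans (hy 0 (Nat.zero_le _))
  have hterm : ∀ ij ∈ antidiagonal m,
      ‖m.choose ij.1 • (y ^ ij.1 * r ^ ij.2)‖ ≤
        D * E * (m.choose ij.1 • (1 ^ ij.1 * ‖r‖ ^ ij.2)) := by
    intro ij hij
    have hj : ij.1 ≤ m := by have := mem_antidiagonal.mp hij; omega
    calc ‖m.choose ij.1 • (y ^ ij.1 * r ^ ij.2)‖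
        ≤ m.choose ij.1 * (‖y ^ ij.1‖ * ‖r ^ ij.2‖) := by
          refine norm_nsmul_le.trans ?_
          gcongr
          exact norm_mul_le _ _
      _ ≤ m.choose ij.1 * (E * (D * ‖r‖ ^ ij.2)) := by
          gcongr
          exacts [hy _ hj, norm_pow_le_max_norm_one_mul_pow r _]
      _ = D * E * (m.choose ij.1 • (1 ^ ij.1 * ‖r‖ ^ ij.2)) := by
          rw [nsmul_eq_mul, one_pow]; ring
  calc ‖(y + r) ^ m‖ ≤ D * E * (1 + ‖r‖) ^ m := by
        rw [h.add_pow', (Commute.one_left ‖r‖).add_pow', mul_sum]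
        exact (norm_sum_le _ _).trans (sum_le_sum hterm)
    _ ≤ D * E * Real.exp (m * ‖r‖) := by
        gcongr
        calc (1 + ‖r‖) ^ m ≤ Real.exp ‖r‖ ^ m := by
              gcongr
              linarith [Real.add_one_le_exp ‖r‖]
          _ = Real.exp (m * ‖r‖) := (Real.exp_nat_mul _ _).symm

theorem Commute.norm_pow_sub_pow_le {x y : R} (h : Commute x y) {N : ℕ} {Kx Ky : ℝ}
    (hx : ∀ i < N, ‖x ^ i‖ ≤ Kx) (hy : ∀ j < N, ‖y ^ j‖ ≤ Ky) :
    ‖x ^ N - y ^ N‖ ≤ N * Kx * Ky * ‖x - y‖ := by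
  have hterm : ∀ i ∈ range N, ‖x ^ i * y ^ (N - 1 - i)‖ ≤ Kx * Ky := fun i hi => by
    have hi : i < N := mem_range.mp hi
    exact (norm_mul_le _ _).trans
      (mul_le_mul (hx i hi) (hy _ (by omega)) (norm_nonneg _) ((norm_nonneg _).trans (hx i hi)))
  calc ‖x ^ N - y ^ N‖ = ‖(∑ i ∈ range N, x ^ i * y ^ (N - 1 - i)) * (x - y)‖ := by
        rw [h.geom_sum₂_mul]
    _ ≤ (∑ i ∈ range N, ‖x ^ i * y ^ (N - 1 - i)‖) * ‖x - y‖ :=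
        (norm_mul_le _ _).trans (by gcongr; exact norm_sum_le _ _)
    _ ≤ (∑ _i ∈ range N, Kx * Ky) * ‖x - y‖ := by gcongr with i hi; exact hterm i hi
    _ = N * Kx * Ky * ‖x - y‖ := by rw [sum_const, card_range, nsmul_eq_mul]; ring

theorem Commute.norm_pow_sub_pow_le_of_norm_sub_le {x y : R} (h : Commute x y) {N : ℕ} {E δ : ℝ}
    (hy : ∀ j ≤ N, ‖y ^ j‖ ≤ E) (hδ : ‖x - y‖ ≤ δ) :
    ‖x ^ N - y ^ N‖ ≤ max ‖(1 : R)‖ 1 * E ^ 2 * Real.exp (N * δ) * (N * δ) := by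
  have hE : 0 ≤ E := (norm_nonneg _).trans (hy 0 (Nat.zero_le _))
  have hyr : Commute y (x - y) := h.symm.sub_right (Commute.refl y)
  have hx : ∀ i < N, ‖x ^ i‖ ≤ max ‖(1 : R)‖ 1 * E * Real.exp (N * δ) := fun i hi =>
    calc ‖x ^ i‖ = ‖(y + (x - y)) ^ i‖ := by rw [add_sub_cancel]
      _ ≤ max ‖(1 : R)‖ 1 * E * Real.exp (i * ‖x - y‖) :=
          hyr.norm_add_pow_le fun j hj => hy j (by omega)
      _ ≤ max ‖(1 : R)‖ 1 * E * Real.exp (N * δ) := by gcongr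
  calc ‖x ^ N - y ^ N‖ ≤ N * (max ‖(1 : R)‖ 1 * E * Real.exp (N * δ)) * E * ‖x - y‖ :=
        h.norm_pow_sub_pow_le hx fun j hj => hy j hj.le
    _ ≤ N * (max ‖(1 : R)‖ 1 * E * Real.exp (N * δ)) * E * δ := by gcongr
    _ = max ‖(1 : R)‖ 1 * E ^ 2 * Real.exp (N * δ) * (N * δ) := by ring

theorem Commute.norm_pow_sub_pow_le_of_norm_sub_le_mul_pow {x y : R} (h : Commute x y)
    {N p : ℕ} {E M τ T : ℝ} (hy : ∀ j ≤ N, ‖y ^ j‖ ≤ E) (hM : 0 ≤ M) (hτ : 0 ≤ τ) (hτT : τ ≤ T)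
    (hNτ : N * τ = T) (hlocal : ‖x - y‖ ≤ M * τ ^ (p + 1)) :
    ‖x ^ N - y ^ N‖ ≤ max ‖(1 : R)‖ 1 * E ^ 2 * Real.exp (M * T ^ (p + 1)) * (M * T) * τ ^ p := by
  have hT : 0 ≤ T := hτ.trans hτT
  have hglobal : N * (M * τ ^ (p + 1)) = M * T * τ ^ p := by rw [← hNτ]; ring
  have hglobal_le : M * T * τ ^ p ≤ M * T ^ (p + 1) := by
    rw [pow_succ, mul_comm (T ^ p), ← mul_assoc]
    gcongr
  have hE : 0 ≤ E := (norm_nonneg _).trans (hy 0 (Nat.zero_le _))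
  refine (h.norm_pow_sub_pow_le_of_norm_sub_le hy hlocal).trans ?_
  rw [hglobal, mul_assoc _ (M * T)]
  gcongr

end Stability

section EulerProduct

variable {R : Type*} [CommSemiring R]

theorem Polynomial.prod_one_add_C_mul_X {ι : Type*} [Fintype ι] (z : ι → R) :
    ∏ i, (1 + C (z i) * X) =
      ∑ k ∈ range (Fintype.card ι + 1), C (∑ s ∈ univ.powersetCard k, ∏ i ∈ s, z i) * X ^ k := by
  classical
  rw [prod_one_add, ← card_univ, powerset_card_disjiUnion]
  refine (sum_disjiUnion _ _ _).trans (sum_congr rfl fun k _ => ?_)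
  rw [map_sum, sum_mul]
  refine sum_congr rfl fun s hs => ?_
  rw [prod_mul_distrib, prod_const, (mem_powersetCard.mp hs).2, map_prod]

theorem List.prod_ofFn_one_add_smul {A : Type*} [Semiring A] [Algebra R A] {p : ℕ}
    (z : Fin p → R) (a : A) :
    (List.ofFn fun i => 1 + z i • a).prod =
      ∑ k ∈ Finset.range (p + 1), (∑ s ∈ univ.powersetCard k, ∏ i ∈ s, z i) • a ^ k := by
  have hfactor : (fun i => 1 + z i • a) = fun i => aeval a (1 + C (z i) * X) := by
    ext i
    simp [Algebra.smul_def]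
  rw [hfactor, ← Function.comp_def (aeval a), ← List.map_ofFn, ← map_list_prod,
    List.prod_ofFn, prod_one_add_C_mul_X, Fintype.card_fin, map_sum]
  simp only [map_mul, aeval_C, map_pow, aeval_X, Algebra.smul_def]

theorem Finset.sum_powersetCard_prod_mul_left {ι : Type*} (s : Finset ι) (c : R) (w : ι → R)
    (k : ℕ) :
    ∑ t ∈ s.powersetCard k, ∏ i ∈ t, c * w i = c ^ k * ∑ t ∈ s.powersetCard k, ∏ i ∈ t, w i := by
  rw [mul_sum]
  refine sum_congr rfl fun t ht => ?_
  rw [prod_mul_distrib, prod_const, (mem_powersetCard.mp ht).2]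

theorem List.prod_ofFn_one_add_smul_eq_sum_inv_factorial_smul {𝕂 A : Type*} [Field 𝕂]
    [Semiring A] [Algebra 𝕂 A] {p : ℕ} (w : Fin p → 𝕂)
    (hw : ∀ k : ℕ, 1 ≤ k → k ≤ p → ∑ s ∈ univ.powersetCard k, ∏ i ∈ s, w i = 1 / (k ! : 𝕂))
    (c : 𝕂) (a : A) :
    (List.ofFn fun i => 1 + (c * w i) • a).prod =
      ∑ k ∈ Finset.range (p + 1), (k !⁻¹ : 𝕂) • (c • a) ^ k := by
  rw [List.prod_ofFn_one_add_smul]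
  refine sum_congr rfl fun k hk => ?_
  rw [sum_powersetCard_prod_mul_left, _root_.smul_pow, smul_smul]
  rcases k.eq_zero_or_pos with rfl | hk0
  · simp
  · rw [hw k hk0 (Nat.lt_succ_iff.mp (mem_range.mp hk)), one_div, mul_comm]

end EulerProduct

namespace NormedSpace

section Rat

variable {𝔸 : Type*} [NormedRing 𝔸] [NormedAlgebra ℚ 𝔸] [CompleteSpace 𝔸]

theorem norm_exp_sub_sum_range_le (x : 𝔸) {m : ℕ} (hm : 0 < m) :
    ‖exp x - ∑ k ∈ range m, (k !⁻¹ : ℚ) • x ^ k‖ ≤ ‖x‖ ^ m * Real.exp ‖x‖ := by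
  have hterm (n : ℕ) : ‖((n + m)!⁻¹ : ℚ) • x ^ (n + m)‖ ≤ ‖x‖ ^ m * (‖x‖ ^ n / n !) := by
    have hfac : ((n + m)! : ℝ)⁻¹ ≤ (n ! : ℝ)⁻¹ :=
      inv_anti₀ (by positivity) (by exact_mod_cast Nat.factorial_le (Nat.le_add_right n m))
    calc ‖((n + m)!⁻¹ : ℚ) • x ^ (n + m)‖ = ((n + m)! : ℝ)⁻¹ * ‖x ^ (n + m)‖ := by
          rw [norm_smul, ← Rat.norm_cast_real]; simp
      _ ≤ (n ! : ℝ)⁻¹ * ‖x‖ ^ (n + m) := by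
          gcongr
          exact norm_pow_le' x (by omega)
      _ = ‖x‖ ^ m * (‖x‖ ^ n / n !) := by ring
  have hmajorant : HasSum (fun n => ‖x‖ ^ m * (‖x‖ ^ n / n !)) (‖x‖ ^ m * Real.exp ‖x‖) := by
    rw [Real.exp_eq_exp_ℝ]
    exact (expSeries_div_hasSum_exp ‖x‖).mul_left _
  rw [congrFun exp_eq_tsum_rat x, ← (expSeries_summable' (𝕂 := ℚ) x).sum_add_tsum_nat_add m,
    add_sub_cancel_left]
  exact tsum_of_norm_bounded hmajorant hterm

theorem norm_exp_pow_le {x : 𝔸} {k : ℕ} {r : ℝ} (hr : k * ‖x‖ ≤ r) :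
    ‖exp x ^ k‖ ≤ ‖(1 : 𝔸)‖ + r * Real.exp r := by
  have hkx : ‖k • x‖ ≤ r := norm_nsmul_le.trans hr
  have h := norm_exp_sub_sum_range_le (k • x) one_pos
  rw [sum_range_one, pow_zero, Nat.factorial_zero, Nat.cast_one, inv_one, one_smul, pow_one] at h
  rw [← exp_nsmul]
  calc ‖exp (k • x)‖ ≤ ‖(1 : 𝔸)‖ + ‖exp (k • x) - 1‖ := norm_le_norm_add_norm_sub' _ _
    _ ≤ ‖(1 : 𝔸)‖ + r * Real.exp r := by
        gcongr
        have hr0 : 0 ≤ r := (norm_nonneg _).trans hkx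
        exact h.trans (by gcongr)

end Rat

section RCLike

variable {𝕂 𝔸 : Type*} [RCLike 𝕂] [NormedRing 𝔸] [NormedAlgebra 𝕂 𝔸]

theorem commute_list_prod_ofFn_one_add_smul_exp {p : ℕ} (z : Fin p → 𝕂) (c : 𝕂) (a : 𝔸) :
    Commute (List.ofFn fun i => 1 + z i • a).prod (exp (c • a)) := by
  refine Commute.exp_right (Commute.smul_right ?_ _)
  refine Commute.list_prod_left _ _ fun u hu => ?_
  obtain ⟨i, rfl⟩ := List.mem_ofFn.mp hu
  exact (Commute.one_left a).add_left ((Commute.refl a).smul_left _)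

variable [CompleteSpace 𝔸]

theorem norm_list_prod_ofFn_one_add_smul_sub_exp_le {p : ℕ} (w : Fin p → 𝕂)
    (hw : ∀ k : ℕ, 1 ≤ k → k ≤ p → ∑ s ∈ univ.powersetCard k, ∏ i ∈ s, w i = 1 / (k ! : 𝕂))
    (c : 𝕂) (a : 𝔸) :
    ‖(List.ofFn fun i => 1 + (c * w i) • a).prod - exp (c • a)‖ ≤
      ‖c • a‖ ^ (p + 1) * Real.exp ‖c • a‖ := by
  let _ : NormedAlgebra ℚ 𝔸 := .restrictScalars ℚ 𝕂 𝔸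
  rw [List.prod_ofFn_one_add_smul_eq_sum_inv_factorial_smul w hw, norm_sub_rev]
  simp_rw [inv_natCast_smul_eq 𝕂 ℚ]
  exact norm_exp_sub_sum_range_le _ p.succ_pos

end RCLike

end NormedSpace

theorem complex_euler_global_error_banach_algebra_general
    {𝔸 : Type*} [NormedRing 𝔸] [NormedAlgebra ℂ 𝔸] [CompleteSpace 𝔸]
    (a : 𝔸) (T : ℝ) (hT : 0 < T) (p : ℕ) (w : Fin p → ℂ)
    (hesymm : ∀ k : ℕ, 1 ≤ k → k ≤ p →
      ∑ s ∈ Finset.univ.powersetCard k, ∏ i ∈ s, w i = 1 / (Nat.factorial k : ℂ)) :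
    ∃ C > (0 : ℝ), ∀ N : ℕ, 0 < N →
      ‖(List.ofFn fun i : Fin p =>
          (1 : 𝔸) + (((T / N : ℝ) : ℂ) * w i) • a).prod ^ N
        - NormedSpace.exp (((T : ℂ)) • a)‖ ≤ C * (T / N) ^ p := by
  let _ : NormedAlgebra ℚ 𝔸 := .restrictScalars ℚ ℂ 𝔸
  set E := ‖(1 : 𝔸)‖ + T * ‖a‖ * Real.exp (T * ‖a‖)
  set M := ‖a‖ ^ (p + 1) * Real.exp (T * ‖a‖)
  refine ⟨max ‖(1 : 𝔸)‖ 1 * E ^ 2 * Real.exp (M * T ^ (p + 1)) * (M * T) + 1, by positivity,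
    fun N hN => ?_⟩
  set h := T / N
  have hNh : N * h = T := mul_div_cancel₀ T (by positivity)
  have hh : 0 ≤ h ∧ h ≤ T := ⟨by positivity, div_le_self hT.le (by exact_mod_cast hN)⟩
  have hha : ‖(h : ℂ) • a‖ = h * ‖a‖ := by
    rw [norm_smul, Complex.norm_real, Real.norm_of_nonneg hh.1]
  have hlocal : ‖(List.ofFn fun i => (1 : 𝔸) + ((h : ℂ) * w i) • a).prod
      - NormedSpace.exp ((h : ℂ) • a)‖ ≤ M * h ^ (p + 1) := by
    refine (NormedSpace.norm_list_prod_ofFn_one_add_smul_sub_exp_le w hesymm _ a).trans ?_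
    rw [hha]
    calc (h * ‖a‖) ^ (p + 1) * Real.exp (h * ‖a‖)
        = ‖a‖ ^ (p + 1) * Real.exp (h * ‖a‖) * h ^ (p + 1) := by ring
      _ ≤ ‖a‖ ^ (p + 1) * Real.exp (T * ‖a‖) * h ^ (p + 1) := by gcongr; exact hh.2
  have hstable : ∀ j ≤ N, ‖NormedSpace.exp ((h : ℂ) • a) ^ j‖ ≤ E := fun j hj =>
    NormedSpace.norm_exp_pow_le <| by
      rw [hha, ← hNh, mul_assoc]
      gcongr
  have hexact : NormedSpace.exp ((h : ℂ) • a) ^ N = NormedSpace.exp ((T : ℂ) • a) := by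
    rw [← NormedSpace.exp_nsmul, ← Nat.cast_smul_eq_nsmul ℂ, smul_smul, ← hNh]
    push_cast; rfl
  rw [← hexact]
  have hcomm :=
    NormedSpace.commute_list_prod_ofFn_one_add_smul_exp (fun i => (h : ℂ) * w i) (h : ℂ) a
  refine (hcomm.norm_pow_sub_pow_le_of_norm_sub_le_mul_pow hstable (by positivity) hh.1 hh.2 hNh
    hlocal).trans ?_
  gcongr
  linarith

/-- Let `𝔸` be a complex Banach algebra, `a ∈ 𝔸`, `T > 0`, and let `w 1, …, w p`
be complex step fractions with `e_k(w) = 1/k!` for `k = 1, …, p`. Then there is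
`C > 0` such that for every positive integer `N`, with `h = T/N`,
`‖(∏ i, (1 + h w i a))^N − exp(T a)‖ ≤ C h^p`: the `p`-step complex Euler method
converges with order `p` for linear systems `ẏ = A y`. (The product is taken in
the order `i = 1, …, p`; the factors pairwise commute.) -/
theorem complex_euler_global_error_banach_algebra
    {𝔸 : Type*} [NormedRing 𝔸] [NormedAlgebra ℂ 𝔸] [CompleteSpace 𝔸]
    (a : 𝔸) (T : ℝ) (hT : 0 < T) (p : ℕ) (hp : 1 ≤ p) (w : Fin p → ℂ)
    (hesymm : ∀ k : ℕ, 1 ≤ k → k ≤ p →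
      ∑ s ∈ Finset.univ.powersetCard k, ∏ i ∈ s, w i = 1 / (Nat.factorial k : ℂ)) :
    ∃ C > (0 : ℝ), ∀ N : ℕ, 0 < N →
      ‖(List.ofFn fun i : Fin p =>
          (1 : 𝔸) + (((T / N : ℝ) : ℂ) * w i) • a).prod ^ N
        - NormedSpace.exp (((T : ℂ)) • a)‖ ≤ C * (T / N) ^ p :=
  complex_euler_global_error_banach_algebra_general a T hT p w hesymm
end

section
/- Every triple (w_1, w_2, w_3) ∈ ℂ³ satisfying the 3-step third-order conditions w_1 + w_2 + w_3 = 1, w_1w_2 + w_2w_3 + w_1w_3 = 1/2, and w_1w_2w_3 = 1/6 contains at least one non-real entry; moreover such a triple exists. Equivalently, the cubic polynomial x³ − x² + x/2 − 1/6 has a non-real complex root. -/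
open Complex

/-- Every triple `(w₁, w₂, w₃) ∈ ℂ³` satisfying the 3-step third-order conditions
`w₁ + w₂ + w₃ = 1`, `w₁w₂ + w₂w₃ + w₁w₃ = 1/2`, `w₁w₂w₃ = 1/6` contains at least
one non-real entry; moreover such a triple exists. -/
theorem third_order_triples_not_all_real :
    (∀ w₁ w₂ w₃ : ℂ, w₁ + w₂ + w₃ = 1 → w₁ * w₂ + w₂ * w₃ + w₁ * w₃ = 1 / 2 →
        w₁ * w₂ * w₃ = 1 / 6 → (w₁.im ≠ 0 ∨ w₂.im ≠ 0 ∨ w₃.im ≠ 0)) ∧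
    (∃ w₁ w₂ w₃ : ℂ, w₁ + w₂ + w₃ = 1 ∧ w₁ * w₂ + w₂ * w₃ + w₁ * w₃ = 1 / 2 ∧
        w₁ * w₂ * w₃ = 1 / 6) := by
  constructor
  · intro w₁ w₂ w₃ h1 h2 h3
    by_contra h
    push_neg at h
    obtain ⟨hi1, hi2, hi3⟩ := h
    set x := w₁.re
    set y := w₂.re
    set z := w₃.re
    have e1 : w₁ = (x : ℂ) := Complex.ext rfl (by simp [hi1])
    have e2 : w₂ = (y : ℂ) := Complex.ext rfl (by simp [hi2])
    have e3 : w₃ = (z : ℂ) := Complex.ext rfl (by simp [hi3])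
    rw [e1, e2, e3] at h1 h2 h3
    rw [show (1 : ℂ) = ((1 : ℝ) : ℂ) by norm_num] at h1
    rw [show (1 / 2 : ℂ) = ((1 / 2 : ℝ) : ℂ) by norm_num] at h2
    rw [show (1 / 6 : ℂ) = ((1 / 6 : ℝ) : ℂ) by norm_num] at h3
    have r1 : x + y + z = 1 := by exact_mod_cast h1
    have r2 : x * y + y * z + x * z = 1 / 2 := by exact_mod_cast h2
    have r3 : x * y * z = 1 / 6 := by exact_mod_cast h3
    nlinarith [sq_nonneg x, sq_nonneg y, sq_nonneg z]
  · -- existence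
    have hp : ∃ a : ℂ, a ^ 3 - a ^ 2 + a / 2 - 1 / 6 = 0 := by
      have hdeg : (Polynomial.X ^ 3 - Polynomial.X ^ 2 + Polynomial.C (1/2 : ℂ) * Polynomial.X
          - Polynomial.C (1/6 : ℂ)).degree = 3 := by
        compute_degree!
      obtain ⟨a, ha⟩ := Complex.exists_root (f := Polynomial.X ^ 3 - Polynomial.X ^ 2 +
        Polynomial.C (1/2 : ℂ) * Polynomial.X - Polynomial.C (1/6 : ℂ)) (by rw [hdeg]; norm_num)
      refine ⟨a, ?_⟩
      simp only [Polynomial.IsRoot, Polynomial.eval_sub, Polynomial.eval_add,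
        Polynomial.eval_pow, Polynomial.eval_mul, Polynomial.eval_X, Polynomial.eval_C] at ha
      linear_combination ha
    obtain ⟨a, key⟩ := hp
    obtain ⟨s, hs⟩ := IsAlgClosed.exists_pow_nat_eq (k := ℂ)
      (-3 * a ^ 2 + 2 * a - 1) (n := 2) (by norm_num)
    refine ⟨a, (1 - a + s) / 2, (1 - a - s) / 2, by ring, ?_, ?_⟩
    · linear_combination (-1/4 : ℂ) * hs
    · linear_combination key - a / 4 * hs
end

section
/- There is no triple (w_1, w_2, w_3) ∈ ℂ³ simultaneously satisfying the four nonlinear third-order conditions: w_1 + w_2 + w_3 = 1, w_1w_2 + w_1w_3 + w_2w_3 = 1/2, w_1w_2w_3 = 1/6, and w_1²w_2 + w_1²w_3 + 2w_1w_2w_3 + w_2²w_3 = 2/3; i.e., the system of order conditions for a 3-step complex Euler method to be third-order accurate for general nonlinear non-autonomous ODEs is overconstrained and has no solution. -/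
/-- The system of order conditions for a 3-step complex Euler method to be
third-order accurate for general nonlinear non-autonomous ODEs is overconstrained:
there is no `(w₁, w₂, w₃) ∈ ℂ³` with `w₁ + w₂ + w₃ = 1`,
`w₁w₂ + w₁w₃ + w₂w₃ = 1/2`, `w₁w₂w₃ = 1/6`, and
`w₁²w₂ + w₁²w₃ + 2w₁w₂w₃ + w₂²w₃ = 2/3`. -/
theorem no_three_step_nonlinear_third_order :
    ¬ ∃ w₁ w₂ w₃ : ℂ,
      w₁ + w₂ + w₃ = 1 ∧
      w₁ * w₂ + w₁ * w₃ + w₂ * w₃ = 1 / 2 ∧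
      w₁ * w₂ * w₃ = 1 / 6 ∧
      w₁ ^ 2 * w₂ + w₁ ^ 2 * w₃ + 2 * (w₁ * w₂ * w₃) + w₂ ^ 2 * w₃ = 2 / 3 := by
  rintro ⟨w₁, w₂, w₃, h1, h2, h3, h4⟩
  have contra : (1 : ℂ) = 0 := by
    linear_combination ((846/443)*w₃ + (-1872/443)*w₃^2 + (846/443)*w₂ + (372/443)*w₂*w₃ + (-4356/443)*w₂*w₃^2 + (3744/443)*w₂*w₃^3 + (-3384/443)*w₂^2*w₃ + (13968/443)*w₂^2*w₃^2 + (2124/443)*w₁*w₃ + (-4356/443)*w₁*w₃^2 + (3744/443)*w₁*w₃^3 + (2124/443)*w₁*w₂ + (-6048/443)*w₁*w₂*w₃ + (10728/443)*w₁*w₂*w₃^2 + (-1692/443)*w₁*w₂^2 + (6984/443)*w₁*w₂^2*w₃) * h1 + ((1278/443) + (-4608/443)*w₃ + (8100/443)*w₃^2 + (-3744/443)*w₃^3 + (-3816/443)*w₂ + (13428/443)*w₂*w₃ + (-13968/443)*w₂*w₃^2 + (1692/443)*w₂^2 + (-6984/443)*w₂^2*w₃ + (-7848/443)*w₂^2*w₃^2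 + (-7848/443)*w₁*w₂*w₃^2) * h2 + ((2004/443) + (-8676/443)*w₃ + (6984/443)*w₃^2 + (-396/443)*w₂ + (3240/443)*w₂*w₃ + (7848/443)*w₂^2*w₃) * h3 + ((-2124/443) + (4356/443)*w₃ + (-3744/443)*w₃^2 + (1692/443)*w₂ + (-6984/443)*w₂*w₃ + (7848/443)*w₂*w₃^2) * h4
  norm_num at contra
end

section
/- Let w = 1/2 + i/(2√3). There exist constants C > 0 and δ > 0 such that for all complex z with |z| ≤ δ, |((1 + wz/2)(1 + \overline{w}z/2)) / ((1 − wz/2)(1 − \overline{w}z/2)) − e^{z}| ≤ C·|z|⁵; i.e., the 2-step complex implicit midpoint method with steps wΔt and \overline{w}Δt is fourth-order accurate for the linear test equation ẏ = λy. -/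
/-!
Since `w + conj w = 1` and `w * conj w = 1 / 3`, the two midpoint factors multiply to the
(2,2) Padé approximant `(1 + z/2 + z²/12) / (1 - z/2 + z²/12)` of `exp`. Its numerator differs
from the degree-4 Taylor polynomial of `exp` times its denominator by `z⁵ (1/144 - z/288)`, and
for `‖z‖ ≤ 1/2` the denominator has norm at least `1/2`; this gives `C = 1`, `δ = 1/2`.
-/

open Complex

section PolynomialIdentities

variable {K : Type*} [Field K] [CharZero K] {a b : K}

lemma one_add_mul_mul_one_add_mul (hsum : a + b = 1) (hprod : a * b = 1 / 3) (z : K) :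
    (1 + a * z / 2) * (1 + b * z / 2) = 1 + z / 2 + z ^ 2 / 12 := by
  linear_combination (z / 2) * hsum + (z ^ 2 / 4) * hprod

lemma one_sub_mul_mul_one_sub_mul (hsum : a + b = 1) (hprod : a * b = 1 / 3) (z : K) :
    (1 - a * z / 2) * (1 - b * z / 2) = 1 - z / 2 + z ^ 2 / 12 := by
  linear_combination (-z / 2) * hsum + (z ^ 2 / 4) * hprod

lemma pade_num_sub_taylor_mul_pade_den (z : K) :
    (1 + z / 2 + z ^ 2 / 12) -
        (1 + z + z ^ 2 / 2 + z ^ 3 / 6 + z ^ 4 / 24) * (1 - z / 2 + z ^ 2 / 12) =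
      z ^ 5 * (1 / 144 - z / 288) := by
  ring

end PolynomialIdentities

lemma conj_half_add_I_div_ofReal (a : ℝ) :
    starRingEnd ℂ (1 / 2 + I / (2 * (a : ℂ))) = 1 / 2 - I / (2 * (a : ℂ)) := by
  simp [map_div₀, sub_eq_add_neg, neg_div, map_ofNat]

lemma half_add_I_div_mul_conj (a : ℝ) :
    (1 / 2 + I / (2 * (a : ℂ))) * starRingEnd ℂ (1 / 2 + I / (2 * (a : ℂ))) =
      1 / 4 + 1 / (4 * (a : ℂ) ^ 2) := by
  rw [conj_half_add_I_div_ofReal]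
  ring_nf
  rw [I_sq]
  ring

lemma norm_one_sub_half_add_sq_div_twelve_ge {z : ℂ} (hz : ‖z‖ ≤ 1 / 2) :
    1 / 2 ≤ ‖1 - z / 2 + z ^ 2 / 12‖ := by
  have hsmall : ‖z / 2 - z ^ 2 / 12‖ ≤ 1 / 2 :=
    calc ‖z / 2 - z ^ 2 / 12‖ ≤ ‖z‖ / 2 + ‖z‖ ^ 2 / 12 := (norm_sub_le _ _).trans_eq <| by
          rw [norm_div, norm_div, norm_pow, Complex.norm_ofNat, Complex.norm_ofNat]
      _ ≤ 1 / 2 / 2 + (1 / 2) ^ 2 / 12 := by gcongr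
      _ ≤ 1 / 2 := by norm_num
  calc (1 : ℝ) / 2 ≤ ‖(1 : ℂ)‖ - ‖z / 2 - z ^ 2 / 12‖ := by rw [norm_one]; linarith
    _ ≤ ‖1 - (z / 2 - z ^ 2 / 12)‖ := norm_sub_norm_le _ _
    _ = ‖1 - z / 2 + z ^ 2 / 12‖ := by ring_nf

lemma norm_exp_sub_taylor_four_le {z : ℂ} (hz : ‖z‖ ≤ 1) :
    ‖exp z - (1 + z + z ^ 2 / 2 + z ^ 3 / 6 + z ^ 4 / 24)‖ ≤ ‖z‖ ^ 5 / 100 := by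
  have h := exp_bound hz (n := 5) (by norm_num)
  norm_num [Finset.sum_range_succ, Nat.factorial] at h
  convert h using 3
  ring

lemma norm_pade_sub_exp_le {z : ℂ} (hz : ‖z‖ ≤ 1 / 2) :
    ‖(1 + z / 2 + z ^ 2 / 12) / (1 - z / 2 + z ^ 2 / 12) - exp z‖ ≤ ‖z‖ ^ 5 := by
  set D := 1 - z / 2 + z ^ 2 / 12
  set T := 1 + z + z ^ 2 / 2 + z ^ 3 / 6 + z ^ 4 / 24
  have hD : 1 / 2 ≤ ‖D‖ := norm_one_sub_half_add_sq_div_twelve_ge hz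
  have hD0 : D ≠ 0 := norm_pos_iff.mp (by linarith)
  have hsplit : (1 + z / 2 + z ^ 2 / 12) / D - exp z =
      z ^ 5 * (1 / 144 - z / 288) / D - (exp z - T) := by
    rw [← pade_num_sub_taylor_mul_pade_den, sub_div, mul_div_cancel_right₀ _ hD0]
    ring
  have hcoeff : ‖1 / 144 - z / 288‖ ≤ 5 / 576 :=
    calc ‖1 / 144 - z / 288‖ ≤ 1 / 144 + ‖z‖ / 288 := (norm_sub_le _ _).trans_eq <| by
          rw [norm_div, norm_div, norm_one, Complex.norm_ofNat, Complex.norm_ofNat]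
      _ ≤ 1 / 144 + 1 / 2 / 288 := by gcongr
      _ = 5 / 576 := by norm_num
  have hrem : ‖z ^ 5 * (1 / 144 - z / 288) / D‖ ≤ ‖z‖ ^ 5 * (5 / 576) / (1 / 2) := by
    rw [norm_div, norm_mul, norm_pow]
    gcongr
  have hexp := norm_exp_sub_taylor_four_le (hz.trans (by norm_num))
  calc _ = ‖z ^ 5 * (1 / 144 - z / 288) / D - (exp z - T)‖ := by rw [hsplit]
    _ ≤ ‖z ^ 5 * (1 / 144 - z / 288) / D‖ + ‖exp z - T‖ := norm_sub_le _ _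
    _ ≤ ‖z‖ ^ 5 * (5 / 576) / (1 / 2) + ‖z‖ ^ 5 / 100 := add_le_add hrem hexp
    _ ≤ ‖z‖ ^ 5 := by nlinarith [pow_nonneg (norm_nonneg z) 5]

/-- The 2-step complex implicit midpoint method with steps `wΔt` and `conj w Δt`,
where `w = 1/2 + i/(2√3)`, is fourth-order accurate for the linear test equation:
there are `C > 0` and `δ > 0` such that for all `z : ℂ` with `|z| ≤ δ`,
`|((1 + wz/2)(1 + conj w z/2)) / ((1 − wz/2)(1 − conj w z/2)) − e^z| ≤ C |z|⁵`. -/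
theorem implicit_midpoint_two_step_fourth_order :
    let w : ℂ := 1 / 2 + I / (2 * (Real.sqrt 3 : ℂ))
    ∃ C > (0 : ℝ), ∃ δ > (0 : ℝ), ∀ z : ℂ, ‖z‖ ≤ δ →
      ‖((1 + w * z / 2) * (1 + (starRingEnd ℂ) w * z / 2)) /
          ((1 - w * z / 2) * (1 - (starRingEnd ℂ) w * z / 2)) - Complex.exp z‖
        ≤ C * ‖z‖ ^ 5 := by
  intro w
  have hsum : w + starRingEnd ℂ w = 1 := by
    rw [conj_half_add_I_div_ofReal]
    ring
  have hprod : w * starRingEnd ℂ w = 1 / 3 := by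
    rw [half_add_I_div_mul_conj, ← ofReal_pow, Real.sq_sqrt zero_le_three]
    norm_num
  refine ⟨1, one_pos, 1 / 2, one_half_pos, fun z hz => ?_⟩
  rw [one_add_mul_mul_one_add_mul hsum hprod, one_sub_mul_mul_one_sub_mul hsum hprod, one_mul]
  exact norm_pade_sub_exp_le hz
end

section
/- Let n ≥ 1 and let w_1, …, w_n be complex numbers with e_k(w_1, …, w_n) = 1/k! for k = 1, …, n. Then there exist constants C > 0 and δ > 0 such that for all complex z with |z| ≤ δ (so small that every factor 1 − w_i z is nonzero), |∏_{i=1}^n (1 − w_i·z)^{-1} − e^{z}| ≤ C·|z|^{n+1}; i.e., the n-step complex backward Euler method along the same path as the n-th order forward Euler path is n-th order accurate for ẏ = λy, matching the (0,n) Padé approximant of the exponential. -/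
/-!
By Vieta, the order conditions make `∏ i, (1 - w i * z)` the degree-`n` Taylor polynomial
`P z` of `exp (-z)`, so `exp (-z) - P z = O(z ^ (n + 1))`. Since `P z → 1`, the identity
`(P z)⁻¹ - exp z = (exp (-z) - P z) * exp z * (P z)⁻¹` transfers this bound to the
backward Euler error.
-/

open Finset Asymptotics Filter Topology

theorem prod_one_sub_mul_eq_sum_powersetCard {ι R : Type*} [CommRing R] (s : Finset ι)
    (w : ι → R) (z : R) :
    ∏ i ∈ s, (1 - w i * z) =
      ∑ k ∈ range (#s + 1), (-z) ^ k * ∑ t ∈ s.powersetCard k, ∏ i ∈ t, w i := by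
  classical
  have hfactor : ∀ i, 1 - w i * z = -z * w i + 1 := fun i => by ring
  simp_rw [hfactor, prod_add, prod_const_one, mul_one, sum_powerset, mul_sum]
  refine sum_congr rfl fun k _ => sum_congr rfl fun t ht => ?_
  rw [prod_mul_distrib, prod_const, (mem_powersetCard.1 ht).2]

theorem isBigO_exp_sub_sum_range (n : ℕ) :
    (fun z : ℂ => Complex.exp z - ∑ k ∈ range (n + 1), z ^ k / k.factorial) =O[𝓝 0]
      fun z => z ^ (n + 1) := by
  refine IsBigO.of_bound ((n + 2 : ℝ) * (((n + 1).factorial : ℝ) * (n + 1))⁻¹) ?_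
  filter_upwards [Metric.closedBall_mem_nhds (0 : ℂ) one_pos] with z hz
  rw [mem_closedBall_zero_iff] at hz
  have hexp := Complex.exp_bound hz n.succ_pos
  push_cast at hexp
  rw [norm_pow, mul_comm]
  convert hexp using 3
  ring

theorem isBigO_inv_sub_exp {P : ℂ → ℂ} {g : ℂ → ℂ} (hP : Tendsto P (𝓝 0) (𝓝 1))
    (h : (fun z => Complex.exp (-z) - P z) =O[𝓝 0] g) :
    (fun z => (P z)⁻¹ - Complex.exp z) =O[𝓝 0] g := by
  have hbounded : (fun z => Complex.exp z * (P z)⁻¹) =O[𝓝 0] fun _ => (1 : ℂ) := by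
    refine Tendsto.isBigO_one ℂ (c := Complex.exp 0 * 1⁻¹) ?_
    exact (Complex.continuous_exp.tendsto 0).mul (hP.inv₀ one_ne_zero)
  refine (h.mul hbounded).congr' ?_ (by simp)
  filter_upwards [hP.eventually_ne one_ne_zero] with z hz
  field_simp
  rw [sub_mul, ← Complex.exp_add, neg_add_cancel, Complex.exp_zero, mul_comm]

theorem prod_one_sub_mul_eq_sum_range_of_esymm {n : ℕ} (w : Fin n → ℂ)
    (hesymm : ∀ k : ℕ, 1 ≤ k → k ≤ n →
      ∑ s ∈ univ.powersetCard k, ∏ i ∈ s, w i = 1 / (k.factorial : ℂ)) (z : ℂ) :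
    ∏ i, (1 - w i * z) = ∑ k ∈ range (n + 1), (-z) ^ k / k.factorial := by
  rw [prod_one_sub_mul_eq_sum_powersetCard, card_univ, Fintype.card_fin]
  refine sum_congr rfl fun k hk => ?_
  rcases k.eq_zero_or_pos with rfl | hk0
  · simp
  · rw [hesymm k hk0 (Nat.lt_succ_iff.1 (mem_range.1 hk)), mul_one_div]

theorem backward_euler_complex_path_accuracy_general (n : ℕ) (w : Fin n → ℂ)
    (hesymm : ∀ k : ℕ, 1 ≤ k → k ≤ n →
      ∑ s ∈ Finset.univ.powersetCard k, ∏ i ∈ s, w i = 1 / (Nat.factorial k : ℂ)) :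
    ∃ C > (0 : ℝ), ∃ δ > (0 : ℝ), ∀ z : ℂ, ‖z‖ ≤ δ →
      (∀ i, 1 - w i * z ≠ 0) ∧
      ‖(∏ i, (1 - w i * z))⁻¹ - Complex.exp z‖ ≤ C * ‖z‖ ^ (n + 1) := by
  set P : ℂ → ℂ := fun z => ∏ i, (1 - w i * z)
  have hP1 : Tendsto P (𝓝 0) (𝓝 1) := by
    simpa [P] using (show Continuous P by fun_prop).tendsto 0
  have htaylor : (fun z => Complex.exp (-z) - P z) =O[𝓝 0] fun z => z ^ (n + 1) := by
    have := (isBigO_exp_sub_sum_range n).comp_tendsto (continuous_neg.tendsto' 0 0 neg_zero)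
    refine IsBigO.of_norm_right ?_
    simpa [P, prod_one_sub_mul_eq_sum_range_of_esymm w hesymm, Function.comp_def] using
      this.norm_right
  obtain ⟨C, hC, hbound⟩ := (isBigO_inv_sub_exp hP1 htaylor).exists_pos
  obtain ⟨δ, hδ, hball⟩ := Metric.nhds_basis_closedBall.eventually_iff.1
    ((hP1.eventually_ne one_ne_zero).and hbound.bound)
  refine ⟨C, hC, δ, hδ, fun z hz => ?_⟩
  obtain ⟨hne, hle⟩ := hball (mem_closedBall_zero_iff.2 hz)
  exact ⟨fun i => prod_ne_zero_iff.1 hne i (mem_univ i), by simpa using hle⟩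

/-- Let `n ≥ 1` and let `w 1, …, w n` be complex numbers with `e_k(w) = 1/k!` for
`k = 1, …, n`. Then there are `C > 0` and `δ > 0` such that for all `z : ℂ` with
`|z| ≤ δ`, every factor `1 − w i z` is nonzero and
`|(∏ i, (1 − w i z))⁻¹ − e^z| ≤ C |z|^{n+1}`: the `n`-step complex backward Euler
method along the same path is `n`-th order accurate for `ẏ = λy`, matching the
(0,n) Padé approximant of the exponential. -/
theorem backward_euler_complex_path_accuracy (n : ℕ) (hn : 1 ≤ n) (w : Fin n → ℂ)
    (hesymm : ∀ k : ℕ, 1 ≤ k → k ≤ n →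
      ∑ s ∈ Finset.univ.powersetCard k, ∏ i ∈ s, w i = 1 / (Nat.factorial k : ℂ)) :
    ∃ C > (0 : ℝ), ∃ δ > (0 : ℝ), ∀ z : ℂ, ‖z‖ ≤ δ →
      (∀ i, 1 - w i * z ≠ 0) ∧
      ‖(∏ i, (1 - w i * z))⁻¹ - Complex.exp z‖ ≤ C * ‖z‖ ^ (n + 1) :=
  backward_euler_complex_path_accuracy_general n w hesymm
end
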